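/- Let n ≥ 1 and let J be an index set. With the free groups G_m^{*J} and face homomorphisms d_t as defined, the image under d_0 : G_{n+1}^{*J} → G_n^{*J} of the Moore chain subgroup ⋂_{k=1}^{n+1} ker(d_k : G_{n+1}^{*J} → G_n^{*J}) equals the Moore cycle subgroup ⋂_{k=0}^{n} ker(d_k : G_n^{*J} → G_{n-1}^{*J}); that is, every Moore cycle in degree n is a Moore boundary, and both equal R[{1, 2, …, n+1}]. -/

import Mathlib

/-- The index set of pairs `(i, j)` with `1 ≤ i < j ≤ m`. -/
abbrev PairIdx (m : ℕ) : Type :=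
  {p : ℕ × ℕ // 1 ≤ p.1 ∧ p.1 < p.2 ∧ p.2 ≤ m}

/-- The free group `G_n^{*J}` on the generators `x_{i,j}(α)`, `1 ≤ i < j ≤ n+1`, `α ∈ J`. -/
abbrev FreeGp (n : ℕ) (J : Type) : Type :=
  FreeGroup (PairIdx (n + 1) × J)

/-- The face homomorphism `d_t : G_n^{*J} → G_{n-1}^{*J}` (for `0 ≤ t ≤ n`), defined on the
generators by the formulas: `d_t x_{i,j}(α) = x_{i-1,j-1}(α)` if `t+1 < i`; ` = 1` if `t+1 = i`
or `t+1 = j`; `= x_{i,j-1}(α)` if `i < t+1 < j`; `= x_{i,j}(α)` if `t+1 > j`. -/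
def faceMap (n : ℕ) (J : Type) (t : Fin (n + 1)) :
    FreeGroup (PairIdx (n + 1) × J) →* FreeGroup (PairIdx n × J) :=
  FreeGroup.lift fun q =>
    if h1 : (t : ℕ) + 1 < q.1.1.1 then
      FreeGroup.of (⟨(q.1.1.1 - 1, q.1.1.2 - 1), by
        have hp := q.1.2; have ht := t.isLt; omega⟩, q.2)
    else if h2 : (t : ℕ) + 1 = q.1.1.1 then 1
    else if h3 : (t : ℕ) + 1 < q.1.1.2 then
      FreeGroup.of (⟨(q.1.1.1, q.1.1.2 - 1), by
        have hp := q.1.2; have ht := t.isLt; omega⟩, q.2)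
    else if h4 : (t : ℕ) + 1 = q.1.1.2 then 1
    else FreeGroup.of (⟨(q.1.1.1, q.1.1.2), by
        have hp := q.1.2; have ht := t.isLt; omega⟩, q.2)

/-- The normal closure `R_{i,j}` in `G_n^{*J}` of the set `{x_{i,j}(α) : α ∈ J}`,
for a pair `p = (i, j)` with `1 ≤ i < j ≤ n+1`. -/
def Rpair (n : ℕ) (J : Type) (p : PairIdx (n + 1)) : Subgroup (FreeGp n J) :=
  Subgroup.normalClosure (Set.range fun α : J => FreeGroup.of (p, α))

/-- The left-normed iterated commutator subgroup `[[…[[H₁, H₂], H₃], …], H_m]` of a list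
of subgroups; a singleton list gives the subgroup itself. -/
def iteratedCommutator {G : Type*} [Group G] : List (Subgroup G) → Subgroup G
  | [] => ⊥
  | H :: L => L.foldl (fun A B => ⁅A, B⁆) H

/-- The set of indices occurring among the entries of a list of pairs. -/
def pairsUnion {m : ℕ} (L : List (PairIdx m)) : Set ℕ :=
  {k | ∃ p ∈ L, k = p.1.1 ∨ k = p.1.2}

/-- `R[T]`: the join of all left-normed iterated commutator subgroups
`[[…[[R_{i₁,j₁}, R_{i₂,j₂}], …], R_{i_t,j_t}]` over nonempty finite sequences of pairs such that
every element of `T` occurs among the indices `i₁, j₁, …, i_t, j_t`. -/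
def RT (n : ℕ) (J : Type) (T : Set ℕ) : Subgroup (FreeGp n J) :=
  ⨆ (L : List (PairIdx (n + 1))) (_ : L ≠ []) (_ : T ⊆ pairsUnion L),
    iteratedCommutator (L.map (Rpair n J))

/-!
The section `s : x_{i,j} ↦ x_{i+1,j+1}` of `d₀` satisfies `d_{k+1} ∘ s = s ∘ d_k`, so every Moore
cycle is the image of a Moore chain; the converse inclusion is the simplicial identity
`d_k ∘ d₀ = d₀ ∘ d_{k+1}`.

Every iterated commutator in `R[{1, …, n+1}]` involves, for each `k`, a pair containing `k + 1`,
hence is killed by `d_k`. Conversely, `r_t = s_{t+1} ∘ d_t` kills the generators `x_{i,j}` with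
`t + 1 ∈ {i, j}` and fixes the others, so `g ≡ r_t g` modulo `R[{t+1}]`. Using
`[R[S], R[S']] ⊆ R[S ∪ S']` (a consequence of the three subgroups lemma), an induction along the
iterated commutators upgrades this to `w ≡ r_t w` modulo `R[T ∪ {t+1}]` for all `w ∈ R[T]`. For
`w ∈ ker d_t` this gives `w ∈ R[T ∪ {t+1}]`, and adding the faces one at a time puts every Moore
cycle in `R[{1, …, n+1}]`.
-/

open scoped commutatorElement

section Commutators

variable {G : Type*} [Group G]

namespace Subgroup

theorem commutator_le_iff_map_mk' {H K D : Subgroup G} [D.Normal] :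
    ⁅H, K⁆ ≤ D ↔ ⁅H.map (QuotientGroup.mk' D), K.map (QuotientGroup.mk' D)⁆ = ⊥ := by
  rw [← map_commutator, map_eq_bot_iff, QuotientGroup.ker_mk']

theorem commutator_commutator_le_of_rotate {A B C D : Subgroup G} [D.Normal]
    (h1 : ⁅⁅B, C⁆, A⁆ ≤ D) (h2 : ⁅⁅C, A⁆, B⁆ ≤ D) : ⁅⁅A, B⁆, C⁆ ≤ D := by
  simp only [commutator_le_iff_map_mk', map_commutator] at *
  exact commutator_commutator_eq_bot_of_rotate h1 h2

theorem iSup_commutator_le {ι : Sort*} {A : ι → Subgroup G} {B D : Subgroup G} [D.Normal]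
    (h : ∀ i, ⁅A i, B⁆ ≤ D) : ⁅⨆ i, A i, B⁆ ≤ D := by
  simp only [commutator_le_iff_map_mk', commutator_eq_bot_iff_le_centralizer, map_iSup,
    iSup_le_iff] at *
  exact h

theorem commutator_iSup_le {ι : Sort*} {A : ι → Subgroup G} {B D : Subgroup G} [D.Normal]
    (h : ∀ i, ⁅B, A i⁆ ≤ D) : ⁅B, ⨆ i, A i⁆ ≤ D := by
  rw [commutator_comm]
  exact iSup_commutator_le fun i => commutator_comm B (A i) ▸ h i

end Subgroup

theorem MonoidHom.commute_of_commutatorElement_mem_ker {H : Type*} [Group H] (f : G →* H)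
    {x y : G} (h : ⁅x, y⁆ ∈ f.ker) : Commute (f x) (f y) := by
  rw [← commutatorElement_eq_one_iff_commute, ← map_commutatorElement]
  exact h

theorem commutatorElement_mul_mul_of_commute {β x σ y : G} (hβσ : Commute β σ)
    (hβy : Commute β y) (hβxy : Commute β ⁅x, y⁆) (hσx : Commute σ x) (hσxy : Commute σ ⁅x, y⁆) :
    ⁅β * x, σ * y⁆ = ⁅x, y⁆ := by
  have hconj_left : ∀ z, Commute β z → ⁅β * x, z⁆ = β * ⁅x, z⁆ * β⁻¹ := fun z hβz => by
    simp only [commutatorElement_def, mul_inv_rev, mul_assoc, hβz.inv_inv.eq]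
  have hconj_right : ⁅x, σ * y⁆ = σ * ⁅x, y⁆ * σ⁻¹ := by
    simp only [commutatorElement_def, mul_inv_rev, mul_assoc]
    rw [← mul_assoc x σ, hσx.symm.eq, mul_assoc]
  rw [hconj_left _ (hβσ.mul_right hβy), hconj_right, hσxy.mul_inv_cancel, hβxy.mul_inv_cancel]

end Commutators

section IteratedCommutator

variable {G : Type*} [Group G]

theorem iteratedCommutator_append_singleton {Ms : List (Subgroup G)} (K : Subgroup G)
    (h : Ms ≠ []) : iteratedCommutator (Ms ++ [K]) = ⁅iteratedCommutator Ms, K⁆ := by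
  cases Ms with
  | nil => exact absurd rfl h
  | cons H L => simp [iteratedCommutator, List.foldl_append]

theorem iteratedCommutator_normal {Ms : List (Subgroup G)} (hMs : ∀ H ∈ Ms, H.Normal) :
    (iteratedCommutator Ms).Normal := by
  induction Ms using List.reverseRecOn with
  | nil => exact Subgroup.normal_bot
  | append_singleton L H ih =>
    rcases eq_or_ne L [] with rfl | hL
    · exact hMs H (by simp)
    · have := ih fun K hK => hMs K (by simp [hK])
      have := hMs H (by simp)
      rw [iteratedCommutator_append_singleton H hL]
      exact Subgroup.commutator_normal _ _

theorem iteratedCommutator_le_of_mem {Ms : List (Subgroup G)} {H K : Subgroup G} [K.Normal]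
    (hH : H ∈ Ms) (hHK : H ≤ K) : iteratedCommutator Ms ≤ K := by
  induction Ms using List.reverseRecOn with
  | nil => simp at hH
  | append_singleton L H' ih =>
    rcases eq_or_ne L [] with rfl | hL
    · simp only [List.nil_append, List.mem_singleton] at hH
      exact hH ▸ hHK
    · rw [iteratedCommutator_append_singleton H' hL]
      rcases List.mem_append.mp hH with hH | hH
      · exact (Subgroup.commutator_mono (ih hH) le_rfl).trans (Subgroup.commutator_le_left K H')
      · rw [← List.mem_singleton.mp hH]
        exact (Subgroup.commutator_mono le_rfl hHK).trans (Subgroup.commutator_le_right _ K)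

theorem map_iteratedCommutator_le {Ms : List (Subgroup G)} (f : G →* G)
    (h : ∀ H ∈ Ms, H.map f ≤ H) : (iteratedCommutator Ms).map f ≤ iteratedCommutator Ms := by
  induction Ms using List.reverseRecOn with
  | nil => exact (Subgroup.map_bot f).le
  | append_singleton L H ih =>
    rcases eq_or_ne L [] with rfl | hL
    · exact h H (by simp)
    · rw [iteratedCommutator_append_singleton H hL, Subgroup.map_commutator]
      exact Subgroup.commutator_mono (ih fun K hK => h K (by simp [hK])) (h H (by simp))

end IteratedCommutator

namespace PairIdx

variable {m : ℕ}

theorem ext_iff {p q : PairIdx m} : p = q ↔ p.1.1 = q.1.1 ∧ p.1.2 = q.1.2 := by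
  rw [Subtype.ext_iff, Prod.ext_iff]

def skip (c : ℕ) (p : PairIdx m) : PairIdx (m + 1) :=
  ⟨(if p.1.1 < c then p.1.1 else p.1.1 + 1, if p.1.2 < c then p.1.2 else p.1.2 + 1), by
    have := p.2; split_ifs <;> omega⟩

def del (t : Fin (m + 1)) (p : PairIdx (m + 1)) (h : ¬(t + 1 = p.1.1 ∨ t + 1 = p.1.2)) :
    PairIdx m :=
  ⟨(if t + 1 < p.1.1 then p.1.1 - 1 else p.1.1, if t + 1 < p.1.2 then p.1.2 - 1 else p.1.2), by
    have := p.2; have := t.isLt; split_ifs <;> omega⟩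

end PairIdx

section Faces

open PairIdx

variable {J : Type}

def skipMap (m : ℕ) (J : Type) (c : ℕ) :
    FreeGroup (PairIdx m × J) →* FreeGroup (PairIdx (m + 1) × J) :=
  FreeGroup.map (Prod.map (skip c) id)

theorem skipMap_of {m : ℕ} (c : ℕ) (p : PairIdx m) (α : J) :
    skipMap m J c (FreeGroup.of (p, α)) = FreeGroup.of (p.skip c, α) :=
  FreeGroup.map.of

theorem faceMap_of {n : ℕ} (t : Fin (n + 1)) (p : PairIdx (n + 1)) (α : J) :
    faceMap n J t (FreeGroup.of (p, α)) =
      if h : t + 1 = p.1.1 ∨ t + 1 = p.1.2 then 1 else FreeGroup.of (p.del t h, α) := by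
  obtain ⟨⟨i, j⟩, hp⟩ := p
  simp only [faceMap, FreeGroup.lift_apply_of]
  split_ifs <;> first | (exfalso; omega) | rfl |
    (congr 2; rw [PairIdx.ext_iff]; simp only [del]; split_ifs <;> omega)

theorem faceMap_comp_skipMap (n : ℕ) (t : Fin (n + 1)) :
    (faceMap n J t).comp (skipMap n J (t + 1)) = MonoidHom.id _ := by
  ext ⟨p, α⟩
  have := p.2
  have hs : ¬(t + 1 = (p.skip (t + 1)).1.1 ∨ t + 1 = (p.skip (t + 1)).1.2) := by
    simp only [skip]; split_ifs <;> omega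
  rw [MonoidHom.comp_apply, skipMap_of, faceMap_of, dif_neg hs, MonoidHom.id_apply]
  congr 2; rw [PairIdx.ext_iff]; simp only [del, skip]; split_ifs <;> omega

theorem faceMap_succ_comp_skipMap_one (n : ℕ) (k : Fin (n + 1)) :
    (faceMap (n + 1) J k.succ).comp (skipMap (n + 1) J 1) =
      (skipMap n J 1).comp (faceMap n J k) := by
  ext ⟨p, α⟩
  have := p.2
  simp only [MonoidHom.comp_apply, skipMap_of, faceMap_of, Fin.val_succ]
  by_cases h : k + 1 = p.1.1 ∨ k + 1 = p.1.2
  · rw [dif_pos h, dif_pos (by simp only [skip]; split_ifs <;> omega), map_one]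
  · rw [dif_neg h, dif_neg (by simp only [skip]; split_ifs <;> omega), skipMap_of]
    congr 2; rw [PairIdx.ext_iff]; simp only [del, skip, Fin.val_succ]; split_ifs <;> omega

theorem faceMap_comp_faceMap_zero (n : ℕ) (k : Fin (n + 1)) :
    (faceMap n J k).comp (faceMap (n + 1) J 0) =
      (faceMap n J 0).comp (faceMap (n + 1) J k.succ) := by
  ext ⟨p, α⟩
  have := p.2
  have : ((0 : Fin (n + 1 + 1)) : ℕ) = 0 := rfl
  have : ((0 : Fin (n + 1)) : ℕ) = 0 := rfl
  have : (k.succ : ℕ) = k + 1 := rfl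
  simp only [MonoidHom.comp_apply, faceMap_of, apply_dite, map_one]
  split_ifs <;> first | rfl | (exfalso; simp only [del] at *; split_ifs at * <;> omega) |
    (congr 2; rw [PairIdx.ext_iff]; simp only [del]; split_ifs <;> omega)

def retraction (n : ℕ) (J : Type) (t : Fin (n + 1)) : FreeGp n J →* FreeGp n J :=
  (skipMap n J (t + 1)).comp (faceMap n J t)

theorem retraction_of_of_mem {n : ℕ} (t : Fin (n + 1)) {p : PairIdx (n + 1)}
    (h : t + 1 = p.1.1 ∨ t + 1 = p.1.2) (α : J) : retraction n J t (FreeGroup.of (p, α)) = 1 := by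
  rw [retraction, MonoidHom.comp_apply, faceMap_of, dif_pos h, map_one]

theorem retraction_of_of_not_mem {n : ℕ} (t : Fin (n + 1)) {p : PairIdx (n + 1)}
    (h : ¬(t + 1 = p.1.1 ∨ t + 1 = p.1.2)) (α : J) :
    retraction n J t (FreeGroup.of (p, α)) = FreeGroup.of (p, α) := by
  have := p.2
  rw [retraction, MonoidHom.comp_apply, faceMap_of, dif_neg h, skipMap_of]
  congr 2; rw [PairIdx.ext_iff]; simp only [del, skip]; split_ifs <;> omega

end Faces

section RT

variable (n : ℕ) (J : Type)

def Rlist (L : List (PairIdx (n + 1))) : Subgroup (FreeGp n J) :=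
  iteratedCommutator (L.map (Rpair n J))

instance Rlist_normal (L : List (PairIdx (n + 1))) : (Rlist n J L).Normal :=
  iteratedCommutator_normal fun _ hH => by
    obtain ⟨p, -, rfl⟩ := List.mem_map.mp hH
    exact Subgroup.normalClosure_normal

variable {n J}

theorem of_mem_Rpair (p : PairIdx (n + 1)) (α : J) : FreeGroup.of (p, α) ∈ Rpair n J p :=
  Subgroup.subset_normalClosure (Set.mem_range_self α)

theorem Rlist_singleton (p : PairIdx (n + 1)) : Rlist n J [p] = Rpair n J p := rfl

theorem Rlist_append_singleton {L : List (PairIdx (n + 1))} (p : PairIdx (n + 1)) (hL : L ≠ []) :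
    Rlist n J (L ++ [p]) = ⁅Rlist n J L, Rpair n J p⁆ := by
  rw [Rlist, List.map_append]
  exact iteratedCommutator_append_singleton _ (by simpa using hL)

theorem RT_eq_iSup (T : Set ℕ) : RT n J T = ⨆ (L) (_ : T ⊆ pairsUnion L), Rlist n J L := by
  refine le_antisymm
    (iSup_le fun L => iSup_le fun _ => iSup_le fun hT => le_iSup₂_of_le L hT le_rfl)
    (iSup₂_le fun L hT => ?_)
  rcases eq_or_ne L [] with rfl | hL
  · exact bot_le
  · exact le_iSup_of_le L (le_iSup_of_le hL (le_iSup_of_le hT le_rfl))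

instance RT_normal (T : Set ℕ) : (RT n J T).Normal := by
  rw [RT_eq_iSup]; infer_instance

theorem Rlist_le_RT {T : Set ℕ} {L : List (PairIdx (n + 1))} (hT : T ⊆ pairsUnion L) :
    Rlist n J L ≤ RT n J T := by
  rw [RT_eq_iSup]; exact le_iSup₂_of_le L hT le_rfl

theorem RT_le {T : Set ℕ} {K : Subgroup (FreeGp n J)}
    (h : ∀ L, T ⊆ pairsUnion L → Rlist n J L ≤ K) : RT n J T ≤ K := by
  rw [RT_eq_iSup]; exact iSup₂_le h

theorem RT_anti {T T' : Set ℕ} (h : T ⊆ T') : RT n J T' ≤ RT n J T :=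
  RT_le fun _ hT' => Rlist_le_RT (h.trans hT')

theorem pairsUnion_append {m : ℕ} (L M : List (PairIdx m)) :
    pairsUnion (L ++ M) = pairsUnion L ∪ pairsUnion M := by
  ext x; simp only [pairsUnion, List.mem_append, Set.mem_union, Set.mem_ofPred_eq]; grind

theorem pairsUnion_singleton {m : ℕ} (p : PairIdx m) : pairsUnion [p] = {p.1.1, p.1.2} := by
  ext x; simp [pairsUnion]

theorem Rpair_le_RT (p : PairIdx (n + 1)) : Rpair n J p ≤ RT n J {p.1.1, p.1.2} :=
  Rlist_le_RT (pairsUnion_singleton p).ge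

theorem RT_empty : RT n J ∅ = ⊤ := by
  rw [eq_top_iff, ← FreeGroup.closure_range_of, Subgroup.closure_le]
  rintro _ ⟨⟨p, α⟩, rfl⟩
  exact RT_anti (Set.empty_subset _) (Rpair_le_RT p (of_mem_Rpair p α))

theorem commutator_RT_Rpair (S : Set ℕ) (p : PairIdx (n + 1)) :
    ⁅RT n J S, Rpair n J p⁆ ≤ RT n J (S ∪ {p.1.1, p.1.2}) := by
  rw [RT_eq_iSup]
  refine Subgroup.iSup_commutator_le fun L => Subgroup.iSup_commutator_le fun hS => ?_
  rcases eq_or_ne L [] with rfl | hL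
  · simp [Rlist, iteratedCommutator]
  · rw [← Rlist_append_singleton p hL, ← pairsUnion_singleton]
    exact Rlist_le_RT ((pairsUnion_append L [p]).ge.trans' (Set.union_subset_union_left _ hS))

theorem commutator_RT_Rlist (L : List (PairIdx (n + 1))) (S : Set ℕ) :
    ⁅RT n J S, Rlist n J L⁆ ≤ RT n J (S ∪ pairsUnion L) := by
  induction L using List.reverseRecOn generalizing S with
  | nil => simp [Rlist, iteratedCommutator]
  | append_singleton L p ih =>
    rcases eq_or_ne L [] with rfl | hL
    · rw [List.nil_append, Rlist_singleton, pairsUnion_singleton]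
      exact commutator_RT_Rpair S p
    · rw [Rlist_append_singleton p hL, Subgroup.commutator_comm]
      apply Subgroup.commutator_commutator_le_of_rotate
      · rw [Subgroup.commutator_comm (Rpair n J p)]
        refine ((Subgroup.commutator_mono (commutator_RT_Rpair S p) le_rfl).trans (ih _)).trans
          (RT_anti ?_)
        rw [pairsUnion_append, pairsUnion_singleton]; intro x; simp only [Set.mem_union]; tauto
      · refine ((Subgroup.commutator_mono (ih S) le_rfl).trans (commutator_RT_Rpair _ p)).trans
          (RT_anti ?_)
        rw [pairsUnion_append, pairsUnion_singleton]; intro x; simp only [Set.mem_union]; tauto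

theorem commutator_RT_RT (S₁ S₂ : Set ℕ) : ⁅RT n J S₁, RT n J S₂⁆ ≤ RT n J (S₁ ∪ S₂) := by
  conv_lhs => rw [RT_eq_iSup S₂]
  exact Subgroup.commutator_iSup_le fun L => Subgroup.commutator_iSup_le fun hS =>
    (commutator_RT_Rlist L S₁).trans (RT_anti (Set.union_subset_union_right S₁ hS))

end RT

section Retraction

variable {n : ℕ} {J : Type}

theorem Rpair_le_ker_faceMap {t : Fin (n + 1)} {p : PairIdx (n + 1)}
    (h : t + 1 = p.1.1 ∨ t + 1 = p.1.2) : Rpair n J p ≤ (faceMap n J t).ker := by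
  refine Subgroup.normalClosure_le_normal ?_
  rintro _ ⟨α, rfl⟩
  exact (faceMap_of t p α).trans (dif_pos h)

theorem map_retraction_Rpair_le (t : Fin (n + 1)) (p : PairIdx (n + 1)) :
    (Rpair n J p).map (retraction n J t) ≤ Rpair n J p := by
  have : ((Rpair n J p).comap (retraction n J t)).Normal :=
    Subgroup.normalClosure_normal.comap _
  rw [Subgroup.map_le_iff_le_comap]
  refine Subgroup.normalClosure_le_normal ?_
  rintro _ ⟨α, rfl⟩
  by_cases h : t + 1 = p.1.1 ∨ t + 1 = p.1.2
  · simp [retraction_of_of_mem t h]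
  · rw [SetLike.mem_coe, Subgroup.mem_comap, retraction_of_of_not_mem t h]
    exact of_mem_Rpair p α

theorem map_retraction_Rlist_le (t : Fin (n + 1)) (L : List (PairIdx (n + 1))) :
    (Rlist n J L).map (retraction n J t) ≤ Rlist n J L :=
  map_iteratedCommutator_le _ fun _ hH => by
    obtain ⟨p, -, rfl⟩ := List.mem_map.mp hH
    exact map_retraction_Rpair_le t p

theorem mk_retraction (t : Fin (n + 1)) (g : FreeGp n J) :
    (retraction n J t g : FreeGp n J ⧸ RT n J {(t : ℕ) + 1}) = g := by
  suffices h : (QuotientGroup.mk' (RT n J {(t : ℕ) + 1})).comp (retraction n J t) =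
      QuotientGroup.mk' _ from DFunLike.congr_fun h g
  ext ⟨p, α⟩
  by_cases h : t + 1 = p.1.1 ∨ t + 1 = p.1.2
  · rw [MonoidHom.comp_apply, retraction_of_of_mem t h, map_one, eq_comm, QuotientGroup.mk'_apply,
      QuotientGroup.eq_one_iff]
    refine RT_anti ?_ (Rpair_le_RT p (of_mem_Rpair p α))
    simpa [eq_comm] using h
  · rw [MonoidHom.comp_apply, retraction_of_of_not_mem t h]

def retractionEqLocus (t : Fin (n + 1)) (S : Set ℕ) : Subgroup (FreeGp n J) :=
  ((QuotientGroup.mk' (RT n J S)).comp (retraction n J t)).eqLocus (QuotientGroup.mk' (RT n J S))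

theorem mem_retractionEqLocus {t : Fin (n + 1)} {S : Set ℕ} {w : FreeGp n J} :
    w ∈ retractionEqLocus t S ↔ (retraction n J t w)⁻¹ * w ∈ RT n J S :=
  QuotientGroup.eq

theorem retractionEqLocus_anti {t : Fin (n + 1)} {S S' : Set ℕ} (h : S ⊆ S') :
    retractionEqLocus (J := J) t S' ≤ retractionEqLocus t S := fun _ hw =>
  mem_retractionEqLocus.mpr (RT_anti h (mem_retractionEqLocus.mp hw))

theorem Rpair_le_retractionEqLocus (t : Fin (n + 1)) (p : PairIdx (n + 1)) :
    Rpair n J p ≤ retractionEqLocus t (insert ((t : ℕ) + 1) {p.1.1, p.1.2}) := by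
  set π := QuotientGroup.mk' (RT n J (insert ((t : ℕ) + 1) {p.1.1, p.1.2}))
  rw [Rpair, Subgroup.normalClosure, Subgroup.closure_le]
  intro _ hconj
  obtain ⟨_, ⟨α, rfl⟩, hconj⟩ := Group.mem_conjugatesOfSet_iff.mp hconj
  obtain ⟨g, rfl⟩ := isConj_iff.mp hconj
  beta_reduce
  have hx : g * FreeGroup.of (p, α) * g⁻¹ ∈ Rpair n J p :=
    Subgroup.normalClosure_normal.conj_mem _ (of_mem_Rpair p α) g
  show π (retraction n J t _) = π _
  by_cases h : t + 1 = p.1.1 ∨ t + 1 = p.1.2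
  · have h1 : π (g * FreeGroup.of (p, α) * g⁻¹) = 1 := by
      rw [← MonoidHom.mem_ker, QuotientGroup.ker_mk',
        Set.insert_eq_of_mem (by simpa [eq_comm] using h)]
      exact Rpair_le_RT p hx
    rw [h1, map_mul (retraction n J t), map_mul (retraction n J t), map_inv (retraction n J t),
      retraction_of_of_mem t h, mul_one, mul_inv_cancel, map_one]
  · -- `g ≡ r_t(g)` modulo `R[{t+1}]`, which commutes with `R_p` modulo `R[{t+1, i, j}]`
    set ν := (retraction n J t g)⁻¹ * g
    have hν : Commute (π ν) (π (FreeGroup.of (p, α))) := by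
      refine π.commute_of_commutatorElement_mem_ker ?_
      rw [QuotientGroup.ker_mk', ← Set.singleton_union]
      exact commutator_RT_RT _ _ (Subgroup.commutator_mem_commutator
        (QuotientGroup.eq.mp (mk_retraction t g)) (Rpair_le_RT p (of_mem_Rpair p α)))
    have hg : π g = π (retraction n J t g) * π ν := by rw [← map_mul, mul_inv_cancel_left]
    rw [map_mul (retraction n J t), map_mul (retraction n J t), map_inv (retraction n J t),
      retraction_of_of_not_mem t h]
    calc π (retraction n J t g * FreeGroup.of (p, α) * (retraction n J t g)⁻¹)
        = π (retraction n J t g) * (π ν * π (FreeGroup.of (p, α)) * (π ν)⁻¹) *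
            (π (retraction n J t g))⁻¹ := by rw [hν.mul_inv_cancel, map_mul, map_mul, map_inv]
      _ = π (g * FreeGroup.of (p, α) * g⁻¹) := by simp only [map_mul, map_inv, hg]; group

end Retraction

section Cycles

variable {n : ℕ} {J : Type}

theorem commutatorElement_mem_retractionEqLocus {t : Fin (n + 1)} {S P : Set ℕ} {b c : FreeGp n J}
    (hb : b ∈ retractionEqLocus t (insert ((t : ℕ) + 1) S))
    (hc : c ∈ retractionEqLocus t (insert ((t : ℕ) + 1) P))
    (hb' : retraction n J t b ∈ RT n J S) (hc' : retraction n J t c ∈ RT n J P) :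
    ⁅b, c⁆ ∈ retractionEqLocus t (insert ((t : ℕ) + 1) (S ∪ P)) := by
  set r := retraction n J t
  set π := QuotientGroup.mk' (RT n J (insert ((t : ℕ) + 1) (S ∪ P)))
  have commute_of {S₁ S₂ : Set ℕ} (hS : insert ((t : ℕ) + 1) (S ∪ P) ⊆ S₁ ∪ S₂) {u v : FreeGp n J}
      (hu : u ∈ RT n J S₁) (hv : v ∈ RT n J S₂) : Commute (π u) (π v) := by
    refine π.commute_of_commutatorElement_mem_ker ?_
    rw [QuotientGroup.ker_mk']
    exact RT_anti hS (commutator_RT_RT S₁ S₂ (Subgroup.commutator_mem_commutator hu hv))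
  have hβ : b * (r b)⁻¹ ∈ RT n J (insert ((t : ℕ) + 1) S) :=
    (RT_normal _).mem_comm (mem_retractionEqLocus.mp hb)
  have hσ : c * (r c)⁻¹ ∈ RT n J (insert ((t : ℕ) + 1) P) :=
    (RT_normal _).mem_comm (mem_retractionEqLocus.mp hc)
  have hβ_comm {v} (hv : v ∈ RT n J P) : Commute (π (b * (r b)⁻¹)) (π v) :=
    commute_of (by rw [Set.insert_union]) hβ hv
  have hσ_comm {v} (hv : v ∈ RT n J S) : Commute (π (c * (r c)⁻¹)) (π v) :=
    commute_of (by rw [Set.insert_union, Set.union_comm]) hσ hv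
  have hrr_S : ⁅r b, r c⁆ ∈ RT n J S := Subgroup.commutator_le_left _ _
    (Subgroup.commutator_mem_commutator hb' (Subgroup.mem_top _))
  have hrr_P : ⁅r b, r c⁆ ∈ RT n J P := Subgroup.commutator_le_right _ _
    (Subgroup.commutator_mem_commutator (Subgroup.mem_top _) hc')
  have key := commutatorElement_mul_mul_of_commute
    (hβ_comm (RT_anti (Set.subset_insert _ _) hσ)) (hβ_comm hc') (hβ_comm hrr_P)
    (hσ_comm hb') (hσ_comm hrr_S)
  show π (r ⁅b, c⁆) = π ⁅b, c⁆
  simp only [map_commutatorElement]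
  rw [← key, ← map_mul, ← map_mul, inv_mul_cancel_right, inv_mul_cancel_right]

theorem Rlist_le_retractionEqLocus (t : Fin (n + 1)) (L : List (PairIdx (n + 1))) :
    Rlist n J L ≤ retractionEqLocus t (insert ((t : ℕ) + 1) (pairsUnion L)) := by
  induction L using List.reverseRecOn with
  | nil => simp [Rlist, iteratedCommutator]
  | append_singleton L p ih =>
    rcases eq_or_ne L [] with rfl | hL
    · rw [List.nil_append, Rlist_singleton, pairsUnion_singleton]
      exact Rpair_le_retractionEqLocus t p
    rw [Rlist_append_singleton p hL, Subgroup.commutator_le, pairsUnion_append,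
      pairsUnion_singleton]
    intro b hb c hc
    exact commutatorElement_mem_retractionEqLocus (ih hb) (Rpair_le_retractionEqLocus t p hc)
      (Rlist_le_RT subset_rfl (map_retraction_Rlist_le t L (Subgroup.mem_map_of_mem _ hb)))
      (Rpair_le_RT p (map_retraction_Rpair_le t p (Subgroup.mem_map_of_mem _ hc)))

theorem RT_le_retractionEqLocus (t : Fin (n + 1)) (T : Set ℕ) :
    RT n J T ≤ retractionEqLocus t (insert ((t : ℕ) + 1) T) :=
  RT_le fun L hT =>
    (Rlist_le_retractionEqLocus t L).trans (retractionEqLocus_anti (Set.insert_subset_insert hT))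

theorem mem_RT_insert_of_faceMap_eq_one {t : Fin (n + 1)} {T : Set ℕ} {w : FreeGp n J}
    (hw : w ∈ RT n J T) (ht : faceMap n J t w = 1) : w ∈ RT n J (insert ((t : ℕ) + 1) T) := by
  have := mem_retractionEqLocus.mp (RT_le_retractionEqLocus t T hw)
  rwa [retraction, MonoidHom.comp_apply, ht, map_one, inv_one, one_mul] at this

theorem mooreCycles_le_RT :
    ⨅ k : Fin (n + 1), (faceMap n J k).ker ≤ RT n J (Set.Icc 1 (n + 1)) := by
  intro w hw
  suffices ∀ m ≤ n + 1, w ∈ RT n J (Set.Icc 1 m) from this (n + 1) le_rfl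
  intro m hm
  induction m with
  | zero => simp [RT_empty]
  | succ m ih =>
    have := mem_RT_insert_of_faceMap_eq_one (ih (by omega))
      (Subgroup.mem_iInf.mp hw ⟨m, by omega⟩)
    rwa [show insert (m + 1) (Set.Icc 1 m) = Set.Icc 1 (m + 1) by ext; simp; omega] at this

theorem RT_le_mooreCycles :
    RT n J (Set.Icc 1 (n + 1)) ≤ ⨅ k : Fin (n + 1), (faceMap n J k).ker :=
  RT_le fun L hT => le_iInf fun k => by
    obtain ⟨p, hp, hk⟩ :=
      hT (Set.mem_Icc.mpr ⟨by omega, by omega⟩ : (k : ℕ) + 1 ∈ Set.Icc 1 (n + 1))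
    exact iteratedCommutator_le_of_mem (List.mem_map_of_mem hp) (Rpair_le_ker_faceMap hk)

theorem map_faceMap_zero_mooreChains :
    (⨅ k : Fin (n + 1), (faceMap (n + 1) J k.succ).ker).map (faceMap (n + 1) J 0) =
      ⨅ k : Fin (n + 1), (faceMap n J k).ker := by
  apply le_antisymm
  · rw [Subgroup.map_le_iff_le_comap]
    intro w hw
    simp only [Subgroup.mem_comap, Subgroup.mem_iInf, MonoidHom.mem_ker] at hw ⊢
    intro k
    rw [← MonoidHom.comp_apply, faceMap_comp_faceMap_zero, MonoidHom.comp_apply, hw k, map_one]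
  · intro z hz
    simp only [Subgroup.mem_iInf, MonoidHom.mem_ker] at hz
    refine ⟨skipMap (n + 1) J 1 z, Subgroup.mem_iInf.mpr fun k => ?_,
      DFunLike.congr_fun (faceMap_comp_skipMap (n + 1) 0) z⟩
    rw [MonoidHom.mem_ker, ← MonoidHom.comp_apply, faceMap_succ_comp_skipMap_one,
      MonoidHom.comp_apply, hz k, map_one]

end Cycles

theorem mooreBoundaries_eq_mooreCycles_general (n : ℕ) (J : Type) :
    Subgroup.map (faceMap (n + 1) J 0)
        (⨅ k : Fin (n + 1), MonoidHom.ker (faceMap (n + 1) J k.succ)) =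
      (⨅ k : Fin (n + 1), MonoidHom.ker (faceMap n J k)) ∧
    (⨅ k : Fin (n + 1), MonoidHom.ker (faceMap n J k)) = RT n J (Set.Icc 1 (n + 1)) :=
  ⟨map_faceMap_zero_mooreChains, le_antisymm mooreCycles_le_RT RT_le_mooreCycles⟩

/-- The image under `d₀ : G_{n+1}^{*J} → G_n^{*J}` of the Moore chain subgroup
`⋂_{k=1}^{n+1} ker(d_k)` equals the Moore cycle subgroup `⋂_{k=0}^{n} ker(d_k)` of `G_n^{*J}`:
every Moore cycle is a Moore boundary, and both equal `R[{1, 2, …, n+1}]`. -/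
theorem mooreBoundaries_eq_mooreCycles (n : ℕ) (hn : 1 ≤ n) (J : Type) :
    Subgroup.map (faceMap (n + 1) J 0)
        (⨅ k : Fin (n + 1), MonoidHom.ker (faceMap (n + 1) J k.succ)) =
      (⨅ k : Fin (n + 1), MonoidHom.ker (faceMap n J k)) ∧
    (⨅ k : Fin (n + 1), MonoidHom.ker (faceMap n J k)) = RT n J (Set.Icc 1 (n + 1)) :=
  mooreBoundaries_eq_mooreCycles_general n J
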